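/- For any n ≥ 1 and any (a,b,c,d) ∈ U(n), the product binom(n, a1) · binom(n, a2) · binom(n, a3) divides B(a,b,c,d). More precisely, B(a,b,c,d) = ± binom(n; a1,b2,d2) · binom(n; a2,b3,c2) · binom(n; a3,c3,d3) · binom(n; b1,c1,d1), where binom(n; x,y,z) = n!/(x!·y!·z!) with x+y+z = n. -/
import Mathlib


/-- Multinomial coefficient `n!/(x!·y!·z!)`. -/
def multi3 (n x y z : ℕ) : ℕ := n.factorial / (x.factorial * y.factorial * z.factorial)

/-- The set `U(n)` of 12-tuples `(a₁,a₂,a₃,b₁,b₂,b₃,c₁,c₂,c₃,d₁,d₂,d₃)` of nonnegative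
integers, encoded as functions `Fin 12 → ℕ`, satisfying the eight linear equations. -/
def Uset (n : ℕ) : Finset (Fin 12 → ℕ) :=
  (Fintype.piFinset fun _ : Fin 12 => Finset.range (n + 1)).filter fun v =>
    v 0 + v 1 + v 2 = n ∧ v 3 + v 4 + v 5 = n ∧ v 6 + v 7 + v 8 = n ∧
    v 9 + v 10 + v 11 = n ∧ v 3 + v 6 + v 9 = n ∧ v 0 + v 4 + v 10 = n ∧
    v 1 + v 5 + v 7 = n ∧ v 2 + v 8 + v 11 = n

/-- The summand `B(a,b,c,d) = (-1)^(a₂+b₁+d₃) · binom(n;a)·binom(n;b)·binom(n;c)·binom(n;d)`. -/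
def B (n : ℕ) (v : Fin 12 → ℕ) : ℤ :=
  (-1) ^ (v 1 + v 3 + v 11) * multi3 n (v 0) (v 1) (v 2) * multi3 n (v 3) (v 4) (v 5) *
    multi3 n (v 6) (v 7) (v 8) * multi3 n (v 9) (v 10) (v 11)

theorem fac_key (x y z : ℕ) :
    x.factorial * y.factorial * z.factorial * ((x+y+z).choose x * (y+z).choose y)
      = (x+y+z).factorial := by
  have h1 := Nat.choose_mul_factorial_mul_factorial (Nat.le_add_right y z)
  have h2 := Nat.choose_mul_factorial_mul_factorial (Nat.le_add_right x (y+z))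
  simp only [Nat.add_sub_cancel_left] at h1 h2
  calc x.factorial * y.factorial * z.factorial * ((x+y+z).choose x * (y+z).choose y)
      = (x+(y+z)).choose x * x.factorial * ((y+z).choose y * y.factorial * z.factorial) := by
        rw [add_assoc]; ring
    _ = (x+(y+z)).choose x * x.factorial * (y+z).factorial := by rw [h1]
    _ = (x+y+z).factorial := by rw [h2, add_assoc]

theorem multi3_eq {n x y z : ℕ} (h : x + y + z = n) :
    multi3 n x y z = n.choose x * (y+z).choose y := by
  subst h
  unfold multi3
  exact Nat.div_eq_of_eq_mul_left (by positivity)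
    (by rw [mul_comm]; exact (fac_key x y z).symm)

theorem multi3_mul {n x y z : ℕ} (h : x + y + z = n) :
    multi3 n x y z * (x.factorial * y.factorial * z.factorial) = n.factorial := by
  rw [multi3_eq h, ← h, mul_comm]
  exact fac_key x y z

/-- For `(a,b,c,d) ∈ U(n)`, the product `binom(n,a₁)·binom(n,a₂)·binom(n,a₃)` divides
`B(a,b,c,d)`; more precisely, `B(a,b,c,d)` equals the signed product of the four
multinomial coefficients `binom(n;a₁,b₂,d₂)`, `binom(n;a₂,b₃,c₂)`, `binom(n;a₃,c₃,d₃)`,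
`binom(n;b₁,c₁,d₁)`. -/
theorem choose_dvd_B (n : ℕ) (hn : 1 ≤ n) (v : Fin 12 → ℕ) (hv : v ∈ Uset n) :
    ((Nat.choose n (v 0) * Nat.choose n (v 1) * Nat.choose n (v 2) : ℕ) : ℤ) ∣ B n v ∧
    B n v = (-1) ^ (v 1 + v 3 + v 11) * multi3 n (v 0) (v 4) (v 10) *
      multi3 n (v 1) (v 5) (v 7) * multi3 n (v 2) (v 8) (v 11) *
      multi3 n (v 3) (v 6) (v 9) := by
  obtain ⟨-, h1, h2, h3, h4, h5, h6, h7, h8⟩ := Finset.mem_filter.mp hv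
  -- row multinomials
  set A1 := multi3 n (v 0) (v 1) (v 2) with hA1
  set A2 := multi3 n (v 3) (v 4) (v 5) with hA2
  set A3 := multi3 n (v 6) (v 7) (v 8) with hA3
  set A4 := multi3 n (v 9) (v 10) (v 11) with hA4
  set C1 := multi3 n (v 0) (v 4) (v 10) with hC1
  set C2 := multi3 n (v 1) (v 5) (v 7) with hC2
  set C3 := multi3 n (v 2) (v 8) (v 11) with hC3
  set C4 := multi3 n (v 3) (v 6) (v 9) with hC4
  have e1 := multi3_mul h1
  have e2 := multi3_mul h2
  have e3 := multi3_mul h3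
  have e4 := multi3_mul h4
  have f1 := multi3_mul h6
  have f2 := multi3_mul h7
  have f3 := multi3_mul h8
  have f4 := multi3_mul h5
  set P := (v 0).factorial * (v 1).factorial * (v 2).factorial *
    ((v 3).factorial * (v 4).factorial * (v 5).factorial) *
    ((v 6).factorial * (v 7).factorial * (v 8).factorial) *
    ((v 9).factorial * (v 10).factorial * (v 11).factorial) with hP
  have hPpos : 0 < P := by positivity
  have hrow : A1 * A2 * A3 * A4 * P = n.factorial ^ 4 := by
    calc A1 * A2 * A3 * A4 * P
        = (A1 * ((v 0).factorial * (v 1).factorial * (v 2).factorial)) *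
          (A2 * ((v 3).factorial * (v 4).factorial * (v 5).factorial)) *
          (A3 * ((v 6).factorial * (v 7).factorial * (v 8).factorial)) *
          (A4 * ((v 9).factorial * (v 10).factorial * (v 11).factorial)) := by rw [hP]; ring
      _ = n.factorial ^ 4 := by rw [e1, e2, e3, e4]; ring
  have hcol : C1 * C2 * C3 * C4 * P = n.factorial ^ 4 := by
    calc C1 * C2 * C3 * C4 * P
        = (C1 * ((v 0).factorial * (v 4).factorial * (v 10).factorial)) *
          (C2 * ((v 1).factorial * (v 5).factorial * (v 7).factorial)) *
          (C3 * ((v 2).factorial * (v 8).factorial * (v 11).factorial)) *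
          (C4 * ((v 3).factorial * (v 6).factorial * (v 9).factorial)) := by rw [hP]; ring
      _ = n.factorial ^ 4 := by rw [f1, f2, f3, f4]; ring
  have hN : A1 * A2 * A3 * A4 = C1 * C2 * C3 * C4 :=
    Nat.eq_of_mul_eq_mul_right hPpos (hrow.trans hcol.symm)
  have heq : B n v = (-1) ^ (v 1 + v 3 + v 11) * C1 * C2 * C3 * C4 := by
    have := congrArg (fun m : ℕ => (m : ℤ)) hN
    push_cast at this
    unfold B
    rw [← hA1, ← hA2, ← hA3, ← hA4]
    linear_combination ((-1 : ℤ)) ^ (v 1 + v 3 + v 11) * this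
  refine ⟨?_, heq⟩
  have d1 : n.choose (v 0) ∣ C1 := by rw [hC1, multi3_eq h6]; exact dvd_mul_right _ _
  have d2 : n.choose (v 1) ∣ C2 := by rw [hC2, multi3_eq h7]; exact dvd_mul_right _ _
  have d3 : n.choose (v 2) ∣ C3 := by rw [hC3, multi3_eq h8]; exact dvd_mul_right _ _
  have hd : n.choose (v 0) * n.choose (v 1) * n.choose (v 2) ∣ C1 * C2 * C3 * C4 :=
    Dvd.dvd.mul_right (mul_dvd_mul (mul_dvd_mul d1 d2) d3) _
  rw [heq]
  have : ((n.choose (v 0) * n.choose (v 1) * n.choose (v 2) : ℕ) : ℤ) ∣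
      ((C1 * C2 * C3 * C4 : ℕ) : ℤ) := Int.natCast_dvd_natCast.mpr hd
  push_cast at this
  calc ((n.choose (v 0) * n.choose (v 1) * n.choose (v 2) : ℕ) : ℤ)
      ∣ ((C1 : ℤ) * C2 * C3 * C4) := by push_cast; exact this
    _ ∣ (-1) ^ (v 1 + v 3 + v 11) * C1 * C2 * C3 * C4 := ⟨(-1) ^ (v 1 + v 3 + v 11), by ring⟩
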